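/- arXiv:2201.01951 — 5 statements merged into one kernel-verified Lean document; each statement's English description precedes it below -/
import Mathlib

section
/- Let U : ℝ^d → ℝ be C² with ∇U(0)=0, ‖D²U(x)‖ ≤ L for all x, and suppose there exist m > 0 and K ≥ 0 such that D²U(x)[y,y] ≥ m for all x with ‖x‖ ≥ K and all unit vectors y. Then for all x, y ∈ ℝ^d with ‖x‖ ∨ ‖y‖ ≥ K + 8KL/m, one has ⟨∇U(x) − ∇U(y), x − y⟩ ≥ (m/2)‖x − y‖². -/
/-!
The quantity `⟪∇U(x) - ∇U(y), x - y⟫` is the increment over `[0, 1]` of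
`t ↦ DU(y + t (x - y))[x - y]`, whose derivative `D²U(y + t (x - y))[x - y, x - y]` is at least
`m ‖x - y‖²` wherever the segment lies outside the ball of radius `K` and at least `-L ‖x - y‖²`
everywhere; by symmetry `‖x‖ ≥ K + 8KL/m`. If `‖x - y‖ ≤ 8KL/m`, the segment never enters the
ball. Otherwise the distance from `y + t (x - y)` to the origin is at least `‖x - y‖` times the
distance from `t` to the parameter of the foot of the perpendicular, so the segment spends
parameter time at most `2K / ‖x - y‖` in the ball, which costs at most
`2K (L + m) ‖x - y‖ ≤ (m/2) ‖x - y‖²`.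
-/

open Real InnerProductSpace Set

theorem mul_sub_le_image_sub_of_le_deriv_Ioo {g g' : ℝ → ℝ} (hg : ∀ t, HasDerivAt g (g' t) t)
    {C p q : ℝ} (hpq : p ≤ q) (hC : ∀ t ∈ Ioo p q, C ≤ g' t) : C * (q - p) ≤ g q - g p := by
  have hdiff : Differentiable ℝ g := fun t => (hg t).differentiableAt
  refine (convex_Icc p q).mul_sub_le_image_sub_of_le_deriv hdiff.continuous.continuousOn
    hdiff.differentiableOn (fun t ht => ?_) p (left_mem_Icc.2 hpq) q (right_mem_Icc.2 hpq) hpq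
  rw [interior_Icc] at ht
  rw [(hg t).deriv]
  exact hC t ht

theorem mul_sub_sub_le_image_sub_of_le_deriv_off_ball {g g' : ℝ → ℝ}
    (hg : ∀ t, HasDerivAt g (g' t) t) {A B c r p q : ℝ} (hpq : p ≤ q) (hr : 0 ≤ r)
    (hAB : 0 ≤ A + B) (hA : ∀ t ∈ Ioo p q, -A ≤ g' t)
    (hB : ∀ t ∈ Ioo p q, r ≤ |t - c| → B ≤ g' t) :
    B * (q - p) - 2 * r * (A + B) ≤ g q - g p := by
  -- `[a, b]` is the part of `[p, q]` within distance `r` of `c`, or a point if there is none.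
  set a := max p (min q (c - r))
  set b := max a (min q (c + r))
  have hpa : p ≤ a := le_max_left _ _
  have hab : a ≤ b := le_max_left _ _
  have hbq : b ≤ q := max_le (max_le hpq (min_le_left _ _)) (min_le_left _ _)
  have hlen : b - a ≤ 2 * r := by
    simp only [a, b, max_def, min_def]
    split_ifs <;> linarith
  have left : B * (a - p) ≤ g a - g p := by
    refine mul_sub_le_image_sub_of_le_deriv_Ioo hg hpa fun t ht => ?_
    have htc : t < c - r := by
      rcases lt_max_iff.1 ht.2 with h | h
      · exact absurd ht.1 h.not_gt
      · exact (lt_min_iff.1 h).2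
    exact hB t ⟨ht.1, ht.2.trans_le (hab.trans hbq)⟩ (le_abs.2 (Or.inr (by linarith)))
  have middle : -A * (b - a) ≤ g b - g a :=
    mul_sub_le_image_sub_of_le_deriv_Ioo hg hab fun t ht =>
      hA t ⟨hpa.trans_lt ht.1, ht.2.trans_le hbq⟩
  have right : B * (q - b) ≤ g q - g b := by
    refine mul_sub_le_image_sub_of_le_deriv_Ioo hg hbq fun t ht => ?_
    have htc : c + r < t := by
      rcases min_lt_iff.1 ((le_max_right _ _).trans_lt ht.1) with h | h
      · exact absurd ht.2 h.not_gt
      · exact h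
    exact hB t ⟨(hpa.trans hab).trans_lt ht.1, ht.2⟩ (le_abs.2 (Or.inl (by linarith)))
  nlinarith [mul_le_mul_of_nonneg_left hlen hAB]

theorem norm_mul_abs_add_inner_div_le_norm_add_smul {E : Type*} [NormedAddCommGroup E]
    [InnerProductSpace ℝ E] (y v : E) (t : ℝ) :
    ‖v‖ * |t + ⟪y, v⟫_ℝ / ‖v‖ ^ 2| ≤ ‖y + t • v‖ := by
  rcases eq_or_ne v 0 with rfl | hv
  · simp
  have hv : 0 < ‖v‖ := norm_pos_iff.2 hv
  have hinner : ⟪y + t • v, v⟫_ℝ = ‖v‖ ^ 2 * (t + ⟪y, v⟫_ℝ / ‖v‖ ^ 2) := by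
    rw [inner_add_left, real_inner_smul_left, real_inner_self_eq_norm_sq]
    field_simp
    ring
  have cauchy_schwarz := abs_real_inner_le_norm (y + t • v) v
  rw [hinner, abs_mul, abs_of_pos (by positivity)] at cauchy_schwarz
  exact le_of_mul_le_mul_right (by linarith) hv

namespace ContinuousMultilinearMap

variable {E : Type*} [NormedAddCommGroup E] [NormedSpace ℝ E]
  (f : ContinuousMultilinearMap ℝ (fun _ : Fin 2 => E) ℝ)

theorem apply_vec_two_smul (a : ℝ) (u : E) : f ![a • u, a • u] = a ^ 2 * f ![u, u] := by
  have : (![a • u, a • u] : Fin 2 → E) = fun i => a • ![u, u] i := by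
    funext i
    fin_cases i <;> rfl
  rw [this, f.map_smul_univ (fun _ => a)]
  simp [sq]

theorem abs_apply_vec_two_le {C : ℝ} (h : ‖f‖ ≤ C) (v : E) : |f ![v, v]| ≤ C * ‖v‖ ^ 2 := by
  simpa [Fin.prod_univ_two, sq] using f.le_of_opNorm_le h ![v, v]

theorem mul_norm_sq_le_apply_vec_two {m : ℝ} (h : ∀ u : E, ‖u‖ = 1 → m ≤ f ![u, u]) (v : E) :
    m * ‖v‖ ^ 2 ≤ f ![v, v] := by
  rcases eq_or_ne v 0 with rfl | hv
  · have h0 : f ![0, 0] = 0 := by simpa using f.apply_vec_two_smul 0 0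
    simp [h0]
  have hv : ‖v‖ ≠ 0 := norm_ne_zero_iff.2 hv
  have hunit : ‖‖v‖⁻¹ • v‖ = 1 := by
    rw [norm_smul, norm_inv, norm_norm, inv_mul_cancel₀ hv]
  have := f.apply_vec_two_smul ‖v‖ (‖v‖⁻¹ • v)
  rw [smul_inv_smul₀ hv] at this
  rw [this, mul_comm m]
  exact mul_le_mul_of_nonneg_left (h _ hunit) (by positivity)

end ContinuousMultilinearMap

theorem hasDerivAt_fderiv_apply_add_smul {E F : Type*} [NormedAddCommGroup E] [NormedSpace ℝ E]
    [NormedAddCommGroup F] [NormedSpace ℝ F] {U : E → F} (hU : ContDiff ℝ 2 U) (y v : E)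
    (t : ℝ) :
    HasDerivAt (fun s : ℝ => fderiv ℝ U (y + s • v) v)
      (iteratedFDeriv ℝ 2 U (y + t • v) ![v, v]) t := by
  have hline : HasDerivAt (fun s : ℝ => y + s • v) v t := by
    simpa using ((hasDerivAt_id t).smul_const v).const_add y
  have hD : HasFDerivAt (fderiv ℝ U) (fderiv ℝ (fderiv ℝ U) (y + t • v)) (y + t • v) :=
    (hU.fderiv_right le_rfl |>.differentiable one_ne_zero _).hasFDerivAt
  have hDline : HasDerivAt (fun s : ℝ => fderiv ℝ U (y + s • v))
      (fderiv ℝ (fderiv ℝ U) (y + t • v) v) t :=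
    hD.comp_hasDerivAt t hline
  rw [iteratedFDeriv_two_apply]
  simpa using hDline.clm_apply (hasDerivAt_const t v)

theorem half_mul_norm_sub_sq_le_inner_gradient_sub {E : Type*} [NormedAddCommGroup E]
    [InnerProductSpace ℝ E] [CompleteSpace E] {U : E → ℝ} {L m K : ℝ}
    (hm : 0 < m) (hmL : m ≤ L) (hK : 0 ≤ K) (hU : ContDiff ℝ 2 U)
    (hHess : ∀ x, ‖iteratedFDeriv ℝ 2 U x‖ ≤ L)
    (hconv : ∀ x y : E, K ≤ ‖x‖ → ‖y‖ = 1 → m ≤ iteratedFDeriv ℝ 2 U x ![y, y])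
    {x y : E} (hx : K + 8 * K * L / m ≤ ‖x‖) :
    m / 2 * ‖x - y‖ ^ 2 ≤ ⟪gradient U x - gradient U y, x - y⟫_ℝ := by
  set v := x - y
  have hg := hasDerivAt_fderiv_apply_add_smul hU y v
  have hgrad : ⟪gradient U x - gradient U y, v⟫_ℝ =
      fderiv ℝ U (y + (1 : ℝ) • v) v - fderiv ℝ U (y + (0 : ℝ) • v) v := by
    simp [inner_sub_left, inner_gradient_left, v]
  have hconv_v : ∀ t : ℝ, K ≤ ‖y + t • v‖ →
      m * ‖v‖ ^ 2 ≤ iteratedFDeriv ℝ 2 U (y + t • v) ![v, v] := fun t ht =>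
    (iteratedFDeriv ℝ 2 U _).mul_norm_sq_le_apply_vec_two (hconv _ · ht) v
  rw [hgrad]
  rcases le_or_gt ‖v‖ (8 * K * L / m) with hsmall | hlarge
  · have houtside : ∀ t ∈ Ioo (0 : ℝ) 1, K ≤ ‖y + t • v‖ := by
      intro t ht
      have hpoint : y + t • v = x - (1 - t) • v := by simp only [v]; module
      have hdist : ‖(1 - t) • v‖ ≤ ‖v‖ := by
        rw [norm_smul, Real.norm_of_nonneg (by linarith [ht.2])]
        exact mul_le_of_le_one_left (norm_nonneg v) (by linarith [ht.1])
      rw [hpoint]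
      linarith [norm_sub_norm_le x ((1 - t) • v)]
    have hgrowth := mul_sub_le_image_sub_of_le_deriv_Ioo hg zero_le_one fun t ht =>
      hconv_v t (houtside t ht)
    nlinarith [sq_nonneg ‖v‖]
  · have hKL : 8 * K * L < m * ‖v‖ := by linarith [(div_lt_iff₀ hm).1 hlarge]
    have hv : 0 < ‖v‖ := by nlinarith [mul_nonneg hK (hm.le.trans hmL)]
    have houtside : ∀ t : ℝ, K / ‖v‖ ≤ |t - -(⟪y, v⟫_ℝ / ‖v‖ ^ 2)| → K ≤ ‖y + t • v‖ := by
      intro t ht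
      rw [sub_neg_eq_add, div_le_iff₀ hv] at ht
      nlinarith [norm_mul_abs_add_inner_div_le_norm_add_smul y v t]
    have hgrowth := mul_sub_sub_le_image_sub_of_le_deriv_off_ball hg zero_le_one
      (A := L * ‖v‖ ^ 2) (B := m * ‖v‖ ^ 2) (by positivity) (by nlinarith [sq_nonneg ‖v‖])
      (fun t _ => neg_le_of_abs_le ((iteratedFDeriv ℝ 2 U _).abs_apply_vec_two_le (hHess _) v))
      (fun t _ ht => hconv_v t (houtside t ht))
    have hcost : 2 * (K / ‖v‖) * (L * ‖v‖ ^ 2 + m * ‖v‖ ^ 2) = 2 * K * (L + m) * ‖v‖ := by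
      field_simp
    have hcost_le : 4 * K * (L + m) ≤ m * ‖v‖ := by nlinarith [mul_le_mul_of_nonneg_left hmL hK]
    nlinarith [mul_le_mul_of_nonneg_right hcost_le hv.le]

theorem strong_convexity_at_infinity_general {d : ℕ} (U : EuclideanSpace ℝ (Fin d) → ℝ)
    (L m K : ℝ) (hm : 0 < m) (hmL : m ≤ L) (hK : 0 ≤ K)
    (hU : ContDiff ℝ 2 U)
    (hHess : ∀ x, ‖iteratedFDeriv ℝ 2 U x‖ ≤ L)
    (hconv : ∀ x y : EuclideanSpace ℝ (Fin d), K ≤ ‖x‖ → ‖y‖ = 1 →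
      m ≤ iteratedFDeriv ℝ 2 U x ![y, y]) :
    ∀ x y : EuclideanSpace ℝ (Fin d), K + 8 * K * L / m ≤ max ‖x‖ ‖y‖ →
      m / 2 * ‖x - y‖ ^ 2 ≤ (inner ℝ (gradient U x - gradient U y) (x - y) : ℝ) := by
  intro x y hxy
  rcases le_total ‖y‖ ‖x‖ with h | h
  · exact half_mul_norm_sub_sq_le_inner_gradient_sub hm hmL hK hU hHess hconv
      (by rwa [max_eq_left h] at hxy)
  · have := half_mul_norm_sub_sq_le_inner_gradient_sub hm hmL hK hU hHess hconv (y := x)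
      (by rwa [max_eq_right h] at hxy)
    rwa [norm_sub_rev, ← inner_neg_neg, neg_sub, neg_sub] at this

/-- Under a `C²` potential with `∇U(0)=0`, Hessian bounded by `L`, and Hessian quadratic
form bounded below by `m` outside the ball of radius `K`, the potential satisfies the
strong convexity at infinity bound
`⟨∇U(x) − ∇U(y), x − y⟩ ≥ (m/2)‖x − y‖²` whenever `max(‖x‖, ‖y‖) ≥ K + 8KL/m`. -/
theorem strong_convexity_at_infinity {d : ℕ} (U : EuclideanSpace ℝ (Fin d) → ℝ)
    (L m K : ℝ) (hm : 0 < m) (hmL : m ≤ L) (hK : 0 ≤ K)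
    (hU : ContDiff ℝ 2 U) (hgrad0 : gradient U 0 = 0)
    (hHess : ∀ x, ‖iteratedFDeriv ℝ 2 U x‖ ≤ L)
    (hconv : ∀ x y : EuclideanSpace ℝ (Fin d), K ≤ ‖x‖ → ‖y‖ = 1 →
      m ≤ iteratedFDeriv ℝ 2 U x ![y, y]) :
    ∀ x y : EuclideanSpace ℝ (Fin d), K + 8 * K * L / m ≤ max ‖x‖ ‖y‖ →
      m / 2 * ‖x - y‖ ^ 2 ≤ (inner ℝ (gradient U x - gradient U y) (x - y) : ℝ) :=
  strong_convexity_at_infinity_general U L m K hm hmL hK hU hHess hconv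
end

section
/- Let U : ℝ^d → ℝ be C² with ∇U(0)=0 and ‖D²U(x)‖ ≤ L for all x, and suppose there exist m > 0 and K ≥ 0 such that D²U(x)[y,y] ≥ m for all ‖x‖ ≥ K and all unit vectors y. Set K̃ = 2K(1 + L/m). Then for every x with ‖x‖ ≥ K̃, ⟨∇U(x), x⟩ ≥ (m/2)‖x‖². -/
/-!
Along the ray `t ↦ t • x` the function `g t = DU(t x)[x]` has `g 0 = 0` and
`g' t = D²U(t x)[x, x]`. For `t ≤ t₀ = K / ‖x‖` this is at least `-L ‖x‖²`, and for `t ≥ t₀`,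
where `t x` lies outside the ball, at least `m ‖x‖²`. Hence
`⟨∇U(x), x⟩ = g 1 ≥ m ‖x‖² - K (m + L) ‖x‖`, which is `≥ (m/2) ‖x‖²` once `‖x‖ ≥ K̃`.
-/

open Real Set

variable {E F : Type*} [NormedAddCommGroup E] [NormedSpace ℝ E]
  [NormedAddCommGroup F] [NormedSpace ℝ F]

theorem mul_sub_le_sub_of_le_hasDerivAt {g g' : ℝ → ℝ} (hg : ∀ t, HasDerivAt g (g' t) t)
    {a b C : ℝ} (hab : a ≤ b) (hC : ∀ t ∈ Icc a b, C ≤ g' t) : C * (b - a) ≤ g b - g a :=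
  (convex_Icc a b).mul_sub_le_image_sub_of_le_deriv
    (fun t _ => (hg t).continuousAt.continuousWithinAt)
    (fun t _ => (hg t).differentiableAt.differentiableWithinAt)
    (fun t ht => (hg t).deriv ▸ hC t (interior_subset ht))
    a (left_mem_Icc.2 hab) b (right_mem_Icc.2 hab) hab

namespace ContinuousMultilinearMap

variable (f : ContinuousMultilinearMap ℝ (fun _ : Fin 2 => E) F)

theorem norm_apply_pair_le (x : E) : ‖f ![x, x]‖ ≤ ‖f‖ * ‖x‖ ^ 2 := by
  simpa [Fin.prod_univ_two, sq] using f.le_opNorm ![x, x]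

theorem apply_pair_smul (c : ℝ) (y : E) : f ![c • y, c • y] = c ^ 2 • f ![y, y] := by
  have hsmul : ![c • y, c • y] = fun i => (fun _ => c) i • ![y, y] i := by
    ext1 i; fin_cases i <;> rfl
  rw [hsmul, f.map_smul_univ]
  simp [sq]

theorem mul_sq_le_apply_pair {f : ContinuousMultilinearMap ℝ (fun _ : Fin 2 => E) ℝ} {m : ℝ}
    (hf : ∀ y : E, ‖y‖ = 1 → m ≤ f ![y, y]) (x : E) : m * ‖x‖ ^ 2 ≤ f ![x, x] := by
  rcases eq_or_ne x 0 with rfl | hx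
  · simpa using (f.map_coord_zero (m := ![0, 0]) 0 rfl).ge
  have hxy : ‖x‖ • (‖x‖⁻¹ • x) = x := by
    rw [smul_smul, mul_inv_cancel₀ (norm_ne_zero_iff.2 hx), one_smul]
  calc m * ‖x‖ ^ 2 ≤ ‖x‖ ^ 2 * f ![‖x‖⁻¹ • x, ‖x‖⁻¹ • x] := by
        rw [mul_comm]
        exact mul_le_mul_of_nonneg_left (hf _ (norm_smul_inv_norm hx)) (sq_nonneg _)
    _ = f ![x, x] := by rw [← smul_eq_mul, ← apply_pair_smul, hxy]

end ContinuousMultilinearMap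

theorem hasDerivAt_fderiv_apply_smul {U : E → F} (hU : ContDiff ℝ 2 U) (x : E) (t : ℝ) :
    HasDerivAt (fun s : ℝ => fderiv ℝ U (s • x) x) (iteratedFDeriv ℝ 2 U (t • x) ![x, x]) t := by
  have hray : HasDerivAt (fun s : ℝ => s • x) x t := by
    simpa using (hasDerivAt_id t).smul_const x
  have hDU : HasFDerivAt (fderiv ℝ U) (fderiv ℝ (fderiv ℝ U) (t • x)) (t • x) :=
    ((hU.fderiv_right (m := 1) (by norm_num)).differentiable one_ne_zero _).hasFDerivAt
  have hDUx : HasDerivAt (fun s : ℝ => fderiv ℝ U (s • x))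
      (fderiv ℝ (fderiv ℝ U) (t • x) x) t := hDU.comp_hasDerivAt t hray
  simpa [iteratedFDeriv_two_apply] using hDUx.clm_apply (hasDerivAt_const t x)

theorem mul_sq_sub_le_fderiv_apply_self {U : E → ℝ} {L m K : ℝ} (hU : ContDiff ℝ 2 U)
    (h0 : fderiv ℝ U 0 = 0) (hHess : ∀ z, ‖iteratedFDeriv ℝ 2 U z‖ ≤ L)
    (hconv : ∀ z y : E, K ≤ ‖z‖ → ‖y‖ = 1 → m ≤ iteratedFDeriv ℝ 2 U z ![y, y])
    (hK : 0 ≤ K) {x : E} (hKx : K ≤ ‖x‖) :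
    m * ‖x‖ ^ 2 - K * (m + L) * ‖x‖ ≤ fderiv ℝ U x x := by
  rcases eq_or_ne x 0 with rfl | hx
  · simp [h0]
  have hxpos : 0 < ‖x‖ := norm_pos_iff.2 hx
  set t₀ := K / ‖x‖
  have ht₀x : t₀ * ‖x‖ = K := div_mul_cancel₀ K hxpos.ne'
  have ht₀ : t₀ ∈ Icc 0 1 := ⟨div_nonneg hK hxpos.le, (div_le_one hxpos).2 hKx⟩
  have hg := hasDerivAt_fderiv_apply_smul hU x
  have hnear : -(L * ‖x‖ ^ 2) * (t₀ - 0) ≤ fderiv ℝ U (t₀ • x) x - fderiv ℝ U ((0 : ℝ) • x) x :=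
    mul_sub_le_sub_of_le_hasDerivAt hg ht₀.1 fun t _ => by
      calc -(L * ‖x‖ ^ 2) ≤ -‖iteratedFDeriv ℝ 2 U (t • x) ![x, x]‖ := by
            gcongr
            exact (ContinuousMultilinearMap.norm_apply_pair_le _ x).trans (by gcongr; exact hHess _)
        _ ≤ _ := Real.norm_eq_abs _ ▸ neg_abs_le _
  have hfar : m * ‖x‖ ^ 2 * (1 - t₀) ≤ fderiv ℝ U ((1 : ℝ) • x) x - fderiv ℝ U (t₀ • x) x :=
    mul_sub_le_sub_of_le_hasDerivAt hg ht₀.2 fun t ht => by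
      have hKt : K ≤ ‖t • x‖ := by
        rw [norm_smul, norm_of_nonneg (ht₀.1.trans ht.1), ← ht₀x]
        exact mul_le_mul_of_nonneg_right ht.1 hxpos.le
      exact ContinuousMultilinearMap.mul_sq_le_apply_pair (hconv _ · hKt) x
  simp only [zero_smul, one_smul, sub_zero, h0, zero_apply] at hnear hfar
  have hsplit : m * ‖x‖ ^ 2 - K * (m + L) * ‖x‖ =
      -(L * ‖x‖ ^ 2) * t₀ + m * ‖x‖ ^ 2 * (1 - t₀) := by
    rw [← ht₀x]; ring
  linarith

/-- Quadratic growth of `⟨∇U(x), x⟩` outside a ball: if `U` is `C²`, `∇U(0)=0`,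
`‖D²U‖ ≤ L` and the Hessian quadratic form is `≥ m` outside `B(0,K)`, then for
`‖x‖ ≥ K̃ = 2K(1 + L/m)` one has `⟨∇U(x), x⟩ ≥ (m/2)‖x‖²`. -/
theorem inner_grad_quadratic_growth {d : ℕ} (U : EuclideanSpace ℝ (Fin d) → ℝ)
    (L m K : ℝ) (hm : 0 < m) (hK : 0 ≤ K)
    (hU : ContDiff ℝ 2 U) (hgrad0 : gradient U 0 = 0)
    (hHess : ∀ x, ‖iteratedFDeriv ℝ 2 U x‖ ≤ L)
    (hconv : ∀ x y : EuclideanSpace ℝ (Fin d), K ≤ ‖x‖ → ‖y‖ = 1 →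
      m ≤ iteratedFDeriv ℝ 2 U x ![y, y]) :
    ∀ x : EuclideanSpace ℝ (Fin d), 2 * K * (1 + L / m) ≤ ‖x‖ →
      m / 2 * ‖x‖ ^ 2 ≤ (inner ℝ (gradient U x) x : ℝ) := by
  intro x hx
  have hL : 0 ≤ L := (norm_nonneg _).trans (hHess 0)
  have hmx : 2 * K * (m + L) ≤ m * ‖x‖ := by
    calc 2 * K * (m + L) = m * (2 * K * (1 + L / m)) := by field_simp
      _ ≤ m * ‖x‖ := mul_le_mul_of_nonneg_left hx hm.le
  have hKx : K ≤ ‖x‖ := by nlinarith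
  have h0 : fderiv ℝ U 0 = 0 := by rw [← toDual_gradient, hgrad0, map_zero]
  rw [inner_gradient_left]
  nlinarith [mul_sq_sub_le_fderiv_apply_self hU h0 hHess hconv hK hKx, norm_nonneg x]
end

section
/- Under the assumptions of the previous lemma (C² potential U, ∇U(0)=0, Hessian bounded by L, Hessian quadratic form ≥ m outside B(0,K)), for every x with ‖x‖ ≥ 2K(1+L/m) one has ⟨∇U(x),x⟩ ≥ (m/2)‖x‖², and consequently, by Cauchy–Schwarz, ‖∇U(x)‖ ≥ (m/2)‖x‖. -/
open Real

/-- Under the assumptions of the quadratic growth lemma, for `‖x‖ ≥ 2K(1+L/m)` the gradient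
satisfies `‖∇U(x)‖ ≥ (m/2)‖x‖` (by Cauchy–Schwarz from `⟨∇U(x), x⟩ ≥ (m/2)‖x‖²`). -/
theorem grad_norm_lower_bound {d : ℕ} (U : EuclideanSpace ℝ (Fin d) → ℝ)
    (L m K : ℝ) (hm : 0 < m) (hK : 0 ≤ K)
    (hU : ContDiff ℝ 2 U) (hgrad0 : gradient U 0 = 0)
    (hHess : ∀ x, ‖iteratedFDeriv ℝ 2 U x‖ ≤ L)
    (hconv : ∀ x y : EuclideanSpace ℝ (Fin d), K ≤ ‖x‖ → ‖y‖ = 1 →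
      m ≤ iteratedFDeriv ℝ 2 U x ![y, y]) :
    ∀ x : EuclideanSpace ℝ (Fin d), 2 * K * (1 + L / m) ≤ ‖x‖ →
      m / 2 * ‖x‖ ^ 2 ≤ (inner ℝ (gradient U x) x : ℝ) ∧
      m / 2 * ‖x‖ ≤ ‖gradient U x‖ := by
  intro x hx
  have hL0 : 0 ≤ L := le_trans (norm_nonneg _) (hHess 0)
  by_cases hx0 : x = 0
  · subst hx0
    simp [hgrad0]
  have hr : 0 < ‖x‖ := norm_pos_iff.2 hx0
  set r := ‖x‖ with hrdef
  have hinner : ∀ y, (inner ℝ (gradient U y) x : ℝ) = fderiv ℝ U y x := fun y =>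
    InnerProductSpace.toDual_symm_apply
  set g : ℝ → ℝ := fun t => fderiv ℝ U (t • x) x with hgdef
  have hF : ContDiff ℝ 1 (fderiv ℝ U) := hU.fderiv_right (by norm_num)
  have hderiv : ∀ t : ℝ, HasDerivAt g (iteratedFDeriv ℝ 2 U (t • x) ![x, x]) t := by
    intro t
    have h1 : HasDerivAt (fun t : ℝ => t • x) x t := by
      simpa using (hasDerivAt_id t).smul_const x
    have h2 : HasFDerivAt (fderiv ℝ U) (fderiv ℝ (fderiv ℝ U) (t • x)) (t • x) :=
      (hF.differentiable one_ne_zero (t • x)).hasFDerivAt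
    have h3 : HasDerivAt (fun t : ℝ => fderiv ℝ U (t • x))
        (fderiv ℝ (fderiv ℝ U) (t • x) x) t := h2.comp_hasDerivAt t h1
    have h4 := h3.clm_apply (hasDerivAt_const t x)
    have heq : iteratedFDeriv ℝ 2 U (t • x) ![x, x]
        = fderiv ℝ (fderiv ℝ U) (t • x) x x + fderiv ℝ U (t • x) 0 := by
      rw [iteratedFDeriv_two_apply]
      simp
    rw [heq]
    exact h4
  have hg_diff : Differentiable ℝ g := fun t => (hderiv t).differentiableAt
  -- scaling of the Hessian lower bound
  have hlow : ∀ z : EuclideanSpace ℝ (Fin d), K ≤ ‖z‖ →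
      m * r ^ 2 ≤ iteratedFDeriv ℝ 2 U z ![x, x] := by
    intro z hz
    have hy : ‖(r⁻¹ • x : EuclideanSpace ℝ (Fin d))‖ = 1 := by
      rw [norm_smul, Real.norm_eq_abs, abs_of_pos (inv_pos.2 hr), ← hrdef,
        inv_mul_cancel₀ hr.ne']
    have hc := hconv z (r⁻¹ • x) hz hy
    have harg : ![(r⁻¹ • x : EuclideanSpace ℝ (Fin d)), r⁻¹ • x]
        = fun i => r⁻¹ • (![x, x] i) := by
      funext i; fin_cases i <;> simp
    have hsmul := (iteratedFDeriv ℝ 2 U z).map_smul_univ (fun _ => r⁻¹) ![x, x]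
    rw [harg, hsmul, Fin.prod_univ_two, smul_eq_mul] at hc
    have h := mul_le_mul_of_nonneg_left hc (by positivity : (0:ℝ) ≤ r ^ 2)
    calc m * r ^ 2 = r ^ 2 * m := by ring
      _ ≤ r ^ 2 * (r⁻¹ * r⁻¹ * iteratedFDeriv ℝ 2 U z ![x, x]) := h
      _ = iteratedFDeriv ℝ 2 U z ![x, x] := by field_simp
  -- upper bound on the Hessian quadratic form
  have hup : ∀ z : EuclideanSpace ℝ (Fin d), ‖iteratedFDeriv ℝ 2 U z ![x, x]‖ ≤ L * r ^ 2 := by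
    intro z
    have h := (iteratedFDeriv ℝ 2 U z).le_opNorm ![x, x]
    have hprod : (∏ i : Fin 2, ‖(![x, x] : Fin 2 → EuclideanSpace ℝ (Fin d)) i‖) = r * r := by
      rw [Fin.prod_univ_two]; simp [hrdef]
    rw [hprod] at h
    calc ‖iteratedFDeriv ℝ 2 U z ![x, x]‖ ≤ ‖iteratedFDeriv ℝ 2 U z‖ * (r * r) := h
      _ ≤ L * (r * r) := by
          exact mul_le_mul_of_nonneg_right (hHess z) (by positivity)
      _ = L * r ^ 2 := by ring
  set s : ℝ := K / r with hsdef
  have hs0 : 0 ≤ s := div_nonneg hK hr.le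
  have hsr : s * r = K := div_mul_cancel₀ K hr.ne'
  have hKr : K ≤ r := by nlinarith [div_nonneg hL0 hm.le]
  have hs1 : s ≤ 1 := (div_le_one hr).2 hKr
  -- lower bound on [s, 1]
  have h1 : m * r ^ 2 * (1 - s) ≤ g 1 - g s := by
    refine (convex_Icc s 1).mul_sub_le_image_sub_of_le_deriv
      hg_diff.continuous.continuousOn hg_diff.differentiableOn ?_ s
      (Set.left_mem_Icc.2 hs1) 1 (Set.right_mem_Icc.2 hs1) hs1
    intro t ht
    rw [interior_Icc] at ht
    rw [(hderiv t).deriv]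
    apply hlow
    have ht0 : 0 ≤ t := le_trans hs0 ht.1.le
    have : ‖t • x‖ = t * r := by
      rw [norm_smul, Real.norm_eq_abs, abs_of_nonneg ht0]
    rw [this, ← hsr]
    exact mul_le_mul_of_nonneg_right ht.1.le hr.le
  -- upper bound on [0, s]
  have h2 : ‖g s - g 0‖ ≤ L * r ^ 2 * (s - 0) := by
    refine norm_image_sub_le_of_norm_deriv_le_segment'
      (f' := fun t => iteratedFDeriv ℝ 2 U (t • x) ![x, x])
      (fun t _ => (hderiv t).hasDerivWithinAt) (fun t _ => hup (t • x)) s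
      (Set.right_mem_Icc.2 hs0)
  have h2' : -(L * r ^ 2 * s) ≤ g s - g 0 := by
    have := abs_le.1 (by simpa [Real.norm_eq_abs] using h2)
    linarith [this.1]
  have hg0 : g 0 = 0 := by
    have : (0:ℝ) • x = 0 := zero_smul ℝ x
    simp only [hgdef, this]
    rw [← hinner 0, hgrad0, inner_zero_left]
  have hg1 : g 1 = (inner ℝ (gradient U x) x : ℝ) := by
    simp only [hgdef, one_smul]
    rw [hinner x]
  have hx' : 2 * K * (m + L) ≤ m * r := by
    have hmx := mul_le_mul_of_nonneg_left hx hm.le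
    have : m * (2 * K * (1 + L / m)) = 2 * K * (m + L) := by
      field_simp
    linarith [this ▸ hmx]
  have hmain : m / 2 * r ^ 2 ≤ (inner ℝ (gradient U x) x : ℝ) := by
    rw [← hg1]
    have hKs : (m + L) * (s * r) * r = (m + L) * K * r := by rw [hsr]
    nlinarith [h1, h2', hg0, hsr, hr, mul_le_mul_of_nonneg_right hx' hr.le]
  refine ⟨hmain, ?_⟩
  have hcs : (inner ℝ (gradient U x) x : ℝ) ≤ ‖gradient U x‖ * r := real_inner_le_norm _ _
  have hfin : m / 2 * r ^ 2 ≤ ‖gradient U x‖ * r := le_trans hmain hcs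
  nlinarith [hfin, hr]
end

section
/- Let β ∈ [0,1). Assume U : ℝ^d → ℝ is C² with ∇U(0)=0, sup_x ‖D²U(x)‖ ≤ L, and there exist m_β > 0, L_β, K_β ≥ 0 such that for all ‖x‖ ≥ K_β and unit y, m_β/(1+‖x‖^β) ≤ D²U(x)[y,y] ≤ L_β/(1+‖x‖^{3β/4}). Then with K̃_β = max{4K_β(1+L/m_β), (4K_β(1+L/m_β))^{1/(1−β)}}, for all x with ‖x‖ ≥ K̃_β one has ⟨∇U(x), x⟩ ≥ (m_β/2)‖x‖²/(1+‖x‖^β). -/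
/-!
Write `g t = DU(t x) x`, so that `⟪∇U x, x⟫ = g 1 - g 0` (as `∇U 0 = 0`) and
`g' t = D²U(t x)[x, x]`. With `s = K_β / ‖x‖`, the Hessian bound gives `g' ≥ -L ‖x‖²` on
`[0, s]`, while on `[s, 1]` the point `t x` lies outside `B(0, K_β)`, so
`g' ≥ m_β ‖x‖² / (1 + ‖x‖^β)`. After clearing the denominator `1 + ‖x‖^β`, the loss on `[0, s]` is
`K_β (m_β + L) ‖x‖ + K_β L ‖x‖^(1+β)`, and the two terms of `K̃_β` bound each summand by
`m_β ‖x‖² / 4`.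
-/

open Real Set

section

variable {E : Type*} [NormedAddCommGroup E] [NormedSpace ℝ E]

theorem ContinuousMultilinearMap.apply_two_smul
    (f : ContinuousMultilinearMap ℝ (fun _ : Fin 2 => E) ℝ) (c : ℝ) (y : E) :
    f ![c • y, c • y] = c ^ 2 * f ![y, y] := by
  have h := f.map_smul_univ (fun _ => c) ![y, y]
  simp only [Fin.prod_univ_two, smul_eq_mul] at h
  convert h using 2
  · ext i; fin_cases i <;> rfl
  · ring

theorem ContinuousMultilinearMap.mul_norm_sq_le_apply_two
    (f : ContinuousMultilinearMap ℝ (fun _ : Fin 2 => E) ℝ) {c : ℝ}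
    (hf : ∀ y : E, ‖y‖ = 1 → c ≤ f ![y, y]) (v : E) : c * ‖v‖ ^ 2 ≤ f ![v, v] := by
  rcases eq_or_ne v 0 with rfl | hv
  · simp [f.map_coord_zero (m := ![0, 0]) 0 rfl]
  have hunit : ‖‖v‖⁻¹ • v‖ = 1 := norm_smul_inv_norm hv
  have hv_eq : ‖v‖ • ‖v‖⁻¹ • v = v := by
    rw [smul_smul, mul_inv_cancel₀ (norm_ne_zero_iff.mpr hv), one_smul]
  calc c * ‖v‖ ^ 2 ≤ ‖v‖ ^ 2 * f ![‖v‖⁻¹ • v, ‖v‖⁻¹ • v] := by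
        rw [mul_comm]; exact mul_le_mul_of_nonneg_left (hf _ hunit) (sq_nonneg _)
    _ = f ![v, v] := by rw [← f.apply_two_smul, hv_eq]

theorem ContinuousMultilinearMap.neg_norm_mul_sq_le_apply_two
    (f : ContinuousMultilinearMap ℝ (fun _ : Fin 2 => E) ℝ) (v : E) :
    -(‖f‖ * ‖v‖ ^ 2) ≤ f ![v, v] := by
  have h := f.le_opNorm ![v, v]
  simp only [Fin.prod_univ_two, Matrix.cons_val_zero, Matrix.cons_val_one, Real.norm_eq_abs] at h
  nlinarith [neg_abs_le (f ![v, v])]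

theorem hasDerivAt_fderiv_smul_apply {U : E → ℝ} (hU : ContDiff ℝ 2 U) (x : E) (t : ℝ) :
    HasDerivAt (fun τ : ℝ => fderiv ℝ U (τ • x) x) (iteratedFDeriv ℝ 2 U (t • x) ![x, x]) t := by
  have hline : HasDerivAt (fun τ : ℝ => τ • x) x t := by
    simpa using (hasDerivAt_id t).smul_const x
  have hU' := (hU.fderiv_right (m := 1) le_rfl).differentiable one_ne_zero (t • x)
  refine ((ContinuousLinearMap.apply ℝ ℝ x).hasFDerivAt.comp_hasDerivAt t
    (hU'.hasFDerivAt.comp_hasDerivAt t hline)).congr_deriv ?_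
  simp [iteratedFDeriv_two_apply]

theorem mul_sq_div_one_add_rpow_le_iteratedFDeriv_smul {U : E → ℝ} {β m K : ℝ} (hβ : 0 ≤ β)
    (hm : 0 ≤ m) (hK : 0 ≤ K)
    (hlow : ∀ x y : E, K ≤ ‖x‖ → ‖y‖ = 1 → m / (1 + ‖x‖ ^ β) ≤ iteratedFDeriv ℝ 2 U x ![y, y])
    {x : E} (hx : 0 < ‖x‖) {t : ℝ} (ht : t ∈ Icc (K / ‖x‖) 1) :
    m * ‖x‖ ^ 2 / (1 + ‖x‖ ^ β) ≤ iteratedFDeriv ℝ 2 U (t • x) ![x, x] := by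
  have ht₀ : 0 ≤ t := (div_nonneg hK hx.le).trans ht.1
  have hnorm : ‖t • x‖ = t * ‖x‖ := by rw [norm_smul, norm_of_nonneg ht₀]
  have hK_le : K ≤ ‖t • x‖ := hnorm ▸ (div_le_iff₀ hx).mp ht.1
  have hle : ‖t • x‖ ≤ ‖x‖ := hnorm ▸ mul_le_of_le_one_left hx.le ht.2
  calc m * ‖x‖ ^ 2 / (1 + ‖x‖ ^ β) = m / (1 + ‖x‖ ^ β) * ‖x‖ ^ 2 := by ring
    _ ≤ m / (1 + ‖t • x‖ ^ β) * ‖x‖ ^ 2 := by gcongr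
    _ ≤ iteratedFDeriv ℝ 2 U (t • x) ![x, x] :=
      (iteratedFDeriv ℝ 2 U (t • x)).mul_norm_sq_le_apply_two (hlow _ · hK_le) x

end

theorem mul_add_mul_le_sub_of_le_deriv {g g' : ℝ → ℝ} (hg : ∀ t, HasDerivAt g (g' t) t)
    {s a b : ℝ} (hs₀ : 0 ≤ s) (hs₁ : s ≤ 1) (ha : ∀ t ∈ Icc 0 s, a ≤ g' t)
    (hb : ∀ t ∈ Icc s 1, b ≤ g' t) : s * a + (1 - s) * b ≤ g 1 - g 0 := by
  have hcont : Continuous g := continuous_iff_continuousAt.mpr fun t => (hg t).continuousAt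
  have hdiff : Differentiable ℝ g := fun t => (hg t).differentiableAt
  have key : ∀ {p q c : ℝ}, p ≤ q → (∀ t ∈ Icc p q, c ≤ g' t) → c * (q - p) ≤ g q - g p :=
    fun {p q c} hpq hc => (convex_Icc p q).mul_sub_le_image_sub_of_le_deriv hcont.continuousOn
      hdiff.differentiableOn (fun t ht => (hg t).deriv ▸ hc t (interior_subset ht))
      p (left_mem_Icc.mpr hpq) q (right_mem_Icc.mpr hpq) hpq
  have h₁ := key hs₀ ha
  have h₂ := key hs₁ hb
  linarith

theorem half_mul_sq_div_one_add_rpow_le {R K L m β : ℝ} (hR : 0 < R) (hm : 0 < m) (hL : 0 ≤ L)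
    (hK : 0 ≤ K) (hC : 4 * K * (1 + L / m) ≤ R) (hC' : 4 * K * (1 + L / m) ≤ R ^ (1 - β)) :
    m / 2 * R ^ 2 / (1 + R ^ β) ≤
      K / R * -(L * R ^ 2) + (1 - K / R) * (m * R ^ 2 / (1 + R ^ β)) := by
  have hD : 0 < 1 + R ^ β := by positivity
  have hC_eq : m * (4 * K * (1 + L / m)) = 4 * K * (m + L) := by field_simp
  have hmC : 4 * K * (m + L) ≤ m * R := hC_eq ▸ mul_le_mul_of_nonneg_left hC hm.le
  have hmC' : 4 * K * L ≤ m * R ^ (1 - β) := by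
    have := mul_le_mul_of_nonneg_left hC' hm.le
    nlinarith
  have h₁ : K * (m + L) * R ≤ m / 4 * R ^ 2 := by nlinarith
  have h₂ : K * L * R ^ β * R ≤ m / 4 * R ^ 2 := by
    have hR_eq : R ^ (1 - β) * R ^ β = R := by rw [← rpow_add hR]; simp
    have := mul_le_mul_of_nonneg_right hmC' (by positivity : 0 ≤ R ^ β * R)
    calc K * L * R ^ β * R = 4 * K * L * (R ^ β * R) / 4 := by ring
      _ ≤ m * (R ^ (1 - β) * R ^ β) * R / 4 := by linarith
      _ = m / 4 * R ^ 2 := by rw [hR_eq]; ring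
  rw [div_le_iff₀ hD]
  have expand : (K / R * -(L * R ^ 2) + (1 - K / R) * (m * R ^ 2 / (1 + R ^ β))) * (1 + R ^ β)
      = m * R ^ 2 - K * (m + L) * R - K * L * R ^ β * R := by
    field_simp
    ring
  rw [expand]
  linarith

theorem inner_grad_growth_beta_general {d : ℕ} (U : EuclideanSpace ℝ (Fin d) → ℝ)
    (β L mβ Kβ : ℝ) (hβ : β ∈ Set.Ico (0:ℝ) 1) (hmβ : 0 < mβ)
    (hKβ : 0 ≤ Kβ)
    (hU : ContDiff ℝ 2 U) (hgrad0 : gradient U 0 = 0)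
    (hHess : ∀ x, ‖iteratedFDeriv ℝ 2 U x‖ ≤ L)
    (hlow : ∀ x y : EuclideanSpace ℝ (Fin d), Kβ ≤ ‖x‖ → ‖y‖ = 1 →
      mβ / (1 + ‖x‖ ^ β) ≤ iteratedFDeriv ℝ 2 U x ![y, y]) :
    ∀ x : EuclideanSpace ℝ (Fin d),
      max (4 * Kβ * (1 + L / mβ)) ((4 * Kβ * (1 + L / mβ)) ^ (1 / (1 - β))) ≤ ‖x‖ →
      mβ / 2 * ‖x‖ ^ 2 / (1 + ‖x‖ ^ β) ≤ (inner ℝ (gradient U x) x : ℝ) := by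
  intro x hx
  rcases eq_or_ne x 0 with rfl | hx₀
  · simp
  have hR : 0 < ‖x‖ := norm_pos_iff.mpr hx₀
  have hL : 0 ≤ L := (norm_nonneg _).trans (hHess 0)
  have hC : 4 * Kβ * (1 + L / mβ) ≤ ‖x‖ := (le_max_left _ _).trans hx
  have hC' : 4 * Kβ * (1 + L / mβ) ≤ ‖x‖ ^ (1 - β) :=
    (rpow_inv_le_iff_of_pos (by positivity) hR.le (by linarith [hβ.2])).mp
      (one_div (1 - β) ▸ (le_max_right _ _).trans hx)
  have hK : Kβ ≤ ‖x‖ := by nlinarith [div_nonneg hL hmβ.le]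
  have hincrement := mul_add_mul_le_sub_of_le_deriv (hasDerivAt_fderiv_smul_apply hU x)
    (div_nonneg hKβ hR.le) ((div_le_one hR).mpr hK) (a := -(L * ‖x‖ ^ 2))
    (fun t _ => ((iteratedFDeriv ℝ 2 U (t • x)).neg_norm_mul_sq_le_apply_two x).trans' <| by
      gcongr; exact hHess _)
    (fun t ht => mul_sq_div_one_add_rpow_le_iteratedFDeriv_smul hβ.1 hmβ.le hKβ hlow hR ht)
  have hfderiv₀ : fderiv ℝ U 0 x = 0 := by rw [← inner_gradient_left, hgrad0, inner_zero_left]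
  rw [inner_gradient_left]
  simp only [one_smul, zero_smul, hfderiv₀, sub_zero] at hincrement
  exact (half_mul_sq_div_one_add_rpow_le hR hmβ hL hKβ hC hC').trans hincrement

/-- Sub-quadratic growth of `⟨∇U(x), x⟩` under the `β`-tail condition: if the Hessian
quadratic form on unit vectors lies between `m_β/(1+‖x‖^β)` and `L_β/(1+‖x‖^{3β/4})`
outside `B(0,K_β)`, then for `‖x‖ ≥ K̃_β = max(4K_β(1+L/m_β), (4K_β(1+L/m_β))^{1/(1−β)})`
one has `⟨∇U(x), x⟩ ≥ (m_β/2)‖x‖²/(1+‖x‖^β)`. -/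
theorem inner_grad_growth_beta {d : ℕ} (U : EuclideanSpace ℝ (Fin d) → ℝ)
    (β L mβ Lβ Kβ : ℝ) (hβ : β ∈ Set.Ico (0:ℝ) 1) (hmβ : 0 < mβ)
    (hLβ : 0 ≤ Lβ) (hKβ : 0 ≤ Kβ)
    (hU : ContDiff ℝ 2 U) (hgrad0 : gradient U 0 = 0)
    (hHess : ∀ x, ‖iteratedFDeriv ℝ 2 U x‖ ≤ L)
    (hlow : ∀ x y : EuclideanSpace ℝ (Fin d), Kβ ≤ ‖x‖ → ‖y‖ = 1 →
      mβ / (1 + ‖x‖ ^ β) ≤ iteratedFDeriv ℝ 2 U x ![y, y])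
    (hup : ∀ x y : EuclideanSpace ℝ (Fin d), Kβ ≤ ‖x‖ → ‖y‖ = 1 →
      iteratedFDeriv ℝ 2 U x ![y, y] ≤ Lβ / (1 + ‖x‖ ^ (3 * β / 4))) :
    ∀ x : EuclideanSpace ℝ (Fin d),
      max (4 * Kβ * (1 + L / mβ)) ((4 * Kβ * (1 + L / mβ)) ^ (1 / (1 - β))) ≤ ‖x‖ →
      mβ / 2 * ‖x‖ ^ 2 / (1 + ‖x‖ ^ β) ≤ (inner ℝ (gradient U x) x : ℝ) :=
  inner_grad_growth_beta_general U β L mβ Kβ hβ hmβ hKβ hU hgrad0 hHess hlow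
end

section
/- Let U : ℝ^d → ℝ be C² with ∇U(0)=0, sup ‖D²U‖ ≤ L, and D²U(x)[y,y] ≥ m > 0 for ‖x‖ ≥ K and unit y. Set η̄ = m/16, K̃ = 2K(1+L/m). For any γ̄ ∈ (0, m/(4L²)], γ ∈ (0, γ̄], and x with ‖x‖ ≥ max(K̃, 4√(d/m)), the one-step ULA kernel Q_γ satisfies Q_γ V_η̄(x) ≤ exp(−η̄ m γ ‖x‖²/4) V_η̄(x), where V_η̄(x) = exp(η̄‖x‖²) and Q_γ f(x) = E[f(x − γ∇U(x) + √(2γ) Z)] with Z standard Gaussian. -/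
/-!
Write `y = x - γ ∇U(x)` and `c = m / 16`. The Gaussian integral is explicit:
`E exp (c ‖y + s Z‖²) = exp (c ‖y‖² / (1 - 2cs²)) (1 - 2cs²)^(-d/2)`.
Integrating the Hessian along the ray through `x`, strong convexity beyond radius `K` and the
bound `‖D²U‖ ≤ L` inside give `⟪∇U(x), x⟫ ≥ m ‖x‖² / 2` once `‖x‖ ≥ 2K(1 + L/m)`; with
`‖∇U(x)‖ ≤ L ‖x‖` and `γ L² ≤ m / 4` this contracts `‖y‖² ≤ (1 - 3mγ/4) ‖x‖²`. The dimensional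
factor `(1 - mγ/4)^(-d/2) ≤ exp (d mγ/4)` is absorbed since `d ≤ c ‖x‖²`.
-/

open MeasureTheory ProbabilityTheory Real

/-- The standard Gaussian distribution `N(0, I_d)` on `ℝ^d`. -/
noncomputable def stdGaussian (d : ℕ) : Measure (EuclideanSpace ℝ (Fin d)) :=
  Measure.map (MeasurableEquiv.toLp 2 (Fin d → ℝ))
    (Measure.pi fun _ => gaussianReal 0 1)

theorem integral_exp_mul_sq_gaussianReal {c s : ℝ} (h : 2 * c * s ^ 2 < 1) (a : ℝ) :
    ∫ z, exp (c * (a + s * z) ^ 2) ∂(gaussianReal 0 1) =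
      exp (c * a ^ 2 / (1 - 2 * c * s ^ 2)) / √(1 - 2 * c * s ^ 2) := by
  set b := 1 / 2 - c * s ^ 2 with hb
  have hb0 : 0 < b := by linarith
  have h2b : 1 - 2 * c * s ^ 2 = 2 * b := by ring
  rw [h2b]
  -- completing the square in the density `exp (-z² / 2) * exp (c (a + s z)²)`
  have hsq : ∀ z, gaussianPDFReal 0 1 z • exp (c * (a + s * z) ^ 2) =
      ((√(2 * π))⁻¹ * exp (c * a ^ 2 / (2 * b))) * exp (-b * (z - a * c * s / b) ^ 2) := by
    intro z
    simp only [gaussianPDFReal, NNReal.coe_one, mul_one, sub_zero, smul_eq_mul, mul_assoc,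
      ← exp_add]
    congr 2
    field_simp
    ring
  rw [integral_gaussianReal_eq_integral_smul one_ne_zero]
  simp_rw [hsq]
  rw [integral_const_mul, integral_sub_right_eq_self (fun z => exp (-b * z ^ 2)),
    integral_gaussian, sqrt_div' _ hb0.le, sqrt_mul' _ hb0.le]
  field_simp
  rw [mul_comm, ← sqrt_mul zero_le_two]

theorem integral_exp_mul_norm_sq_stdGaussian {d : ℕ} {c s : ℝ} (h : 2 * c * s ^ 2 < 1)
    (y : EuclideanSpace ℝ (Fin d)) :
    ∫ z, exp (c * ‖y + s • z‖ ^ 2) ∂(stdGaussian d) =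
      exp (c * ‖y‖ ^ 2 / (1 - 2 * c * s ^ 2)) / √(1 - 2 * c * s ^ 2) ^ d := by
  have hcoord : ∀ z : Fin d → ℝ, exp (c * ‖y + s • WithLp.toLp 2 z‖ ^ 2) =
      ∏ i, exp (c * (y i + s * z i) ^ 2) := by
    intro z
    simp [EuclideanSpace.norm_sq_eq, Finset.mul_sum, exp_sum]
  rw [_root_.stdGaussian, integral_map_equiv]
  simp only [MeasurableEquiv.toLp_apply, hcoord]
  rw [integral_fintype_prod_eq_prod (fun i z => exp (c * (y i + s * z) ^ 2)),
    Finset.prod_congr rfl fun i _ => integral_exp_mul_sq_gaussianReal h (y i),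
    Finset.prod_div_distrib, ← exp_sum, EuclideanSpace.norm_sq_eq]
  simp [Finset.mul_sum, Finset.sum_div]

section Potential

variable {E : Type*} [NormedAddCommGroup E] [NormedSpace ℝ E] {U : E → ℝ} {L m K : ℝ}

theorem norm_fderiv_le_of_norm_iteratedFDeriv_two_le (hU : ContDiff ℝ 2 U)
    (hfderiv0 : fderiv ℝ U 0 = 0) (hHess : ∀ x, ‖iteratedFDeriv ℝ 2 U x‖ ≤ L) (x : E) :
    ‖fderiv ℝ U x‖ ≤ L * ‖x‖ := by
  have hdiff : Differentiable ℝ (fderiv ℝ U) :=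
    (hU.fderiv_right le_rfl).differentiable one_ne_zero
  have hbound : ∀ z, ‖fderiv ℝ (fderiv ℝ U) z‖ ≤ L := fun z => by
    rw [← norm_iteratedFDeriv_one, norm_iteratedFDeriv_fderiv]
    exact hHess z
  simpa [hfderiv0] using
    convex_univ.norm_image_sub_le_of_norm_fderiv_le (fun z _ => hdiff z) (fun z _ => hbound z)
      (Set.mem_univ 0) (Set.mem_univ x)

theorem mul_norm_sq_le_fderiv_fderiv
    (hconv : ∀ x y : E, K ≤ ‖x‖ → ‖y‖ = 1 → m ≤ iteratedFDeriv ℝ 2 U x ![y, y])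
    {z : E} (hz : K ≤ ‖z‖) (v : E) :
    m * ‖v‖ ^ 2 ≤ fderiv ℝ (fderiv ℝ U) z v v := by
  have hscaled : ∀ (r : ℝ) (u : E), ‖u‖ = 1 →
      m * r ^ 2 ≤ fderiv ℝ (fderiv ℝ U) z (r • u) (r • u) := fun r u hu => by
    have := hconv z u hz hu
    simp only [iteratedFDeriv_two_apply, Matrix.cons_val_zero, Matrix.cons_val_one] at this
    simp only [map_smul, FunLike.coe_smul, Pi.smul_apply, smul_eq_mul]
    nlinarith [sq_nonneg r]
  rcases eq_or_ne v 0 with rfl | hv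
  · simp
  have hv' : ‖v‖ ≠ 0 := norm_ne_zero_iff.mpr hv
  have hunit : ‖‖v‖⁻¹ • v‖ = 1 := by rw [norm_smul, norm_inv, norm_norm, inv_mul_cancel₀ hv']
  simpa only [smul_inv_smul₀ hv'] using hscaled ‖v‖ _ hunit

theorem sub_mul_le_fderiv_apply_self (hK : 0 ≤ K) (hU : ContDiff ℝ 2 U)
    (hfderiv0 : fderiv ℝ U 0 = 0) (hHess : ∀ x, ‖iteratedFDeriv ℝ 2 U x‖ ≤ L)
    (hconv : ∀ x y : E, K ≤ ‖x‖ → ‖y‖ = 1 → m ≤ iteratedFDeriv ℝ 2 U x ![y, y])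
    {x : E} (hx : K ≤ ‖x‖) :
    m * ‖x‖ ^ 2 - (m + L) * K * ‖x‖ ≤ fderiv ℝ U x x := by
  -- Split the ray at `t₀ ‖x‖ = K`: up to `t₀` only the bound `L` on `D²U` is available, beyond it
  -- `t ↦ DU(t x) x` grows at rate at least `m ‖x‖²`.
  set t₀ := K / ‖x‖
  have ht₀ : t₀ * ‖x‖ = K := by
    rcases eq_or_ne ‖x‖ 0 with h | h
    · rw [h] at hx ⊢; simp only [mul_zero]; linarith
    · exact div_mul_cancel₀ K h
  have ht₀0 : 0 ≤ t₀ := by positivity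
  have ht₀1 : t₀ ≤ 1 := div_le_one_of_le₀ hx (norm_nonneg x)
  set g : ℝ → ℝ := fun t => fderiv ℝ U (t • x) x
  have hdiff : Differentiable ℝ (fderiv ℝ U) :=
    (hU.fderiv_right le_rfl).differentiable one_ne_zero
  have hg : ∀ t, HasDerivAt g (fderiv ℝ (fderiv ℝ U) (t • x) x x) t := fun t => by
    have hline : HasDerivAt (fun t : ℝ => t • x) x t := by
      simpa using (hasDerivAt_id t).smul_const x
    have hD : HasDerivAt (fun t : ℝ => fderiv ℝ U (t • x))
        (fderiv ℝ (fderiv ℝ U) (t • x) x) t :=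
      (hdiff (t • x)).hasFDerivAt.comp_hasDerivAt t hline
    simpa using hD.clm_apply (hasDerivAt_const t x)
  have hgrowth : m * ‖x‖ ^ 2 * (1 - t₀) ≤ g 1 - g t₀ := by
    refine (convex_Icc t₀ 1).mul_sub_le_image_sub_of_le_deriv
      (fun t _ => (hg t).continuousAt.continuousWithinAt)
      (fun t _ => (hg t).differentiableAt.differentiableWithinAt)
      (fun t ht => ?_) t₀ ⟨le_rfl, ht₀1⟩ 1 ⟨ht₀1, le_rfl⟩ ht₀1
    rw [interior_Icc] at ht
    rw [(hg t).deriv]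
    refine mul_norm_sq_le_fderiv_fderiv hconv ?_ x
    rw [norm_smul, Real.norm_of_nonneg (ht₀0.trans ht.1.le), ← ht₀]
    exact mul_le_mul_of_nonneg_right ht.1.le (norm_nonneg x)
  have hstart : -(L * K * ‖x‖) ≤ g t₀ := by
    have hop := (fderiv ℝ U (t₀ • x)).le_opNorm x
    have hnorm := norm_fderiv_le_of_norm_iteratedFDeriv_two_le hU hfderiv0 hHess (t₀ • x)
    rw [norm_smul, Real.norm_of_nonneg ht₀0, ht₀] at hnorm
    have := (abs_le.mp (hop.trans (mul_le_mul_of_nonneg_right hnorm (norm_nonneg x)))).1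
    linarith
  have hg1 : g 1 = fderiv ℝ U x x := by simp [g]
  have hgt : m * ‖x‖ ^ 2 * t₀ = m * K * ‖x‖ := by rw [← ht₀]; ring
  linarith

theorem half_mul_norm_sq_le_fderiv_apply_self (hm : 0 < m) (hL : 0 ≤ L) (hK : 0 ≤ K)
    (hU : ContDiff ℝ 2 U) (hfderiv0 : fderiv ℝ U 0 = 0)
    (hHess : ∀ x, ‖iteratedFDeriv ℝ 2 U x‖ ≤ L)
    (hconv : ∀ x y : E, K ≤ ‖x‖ → ‖y‖ = 1 → m ≤ iteratedFDeriv ℝ 2 U x ![y, y])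
    {x : E} (hx : 2 * K * (1 + L / m) ≤ ‖x‖) :
    m / 2 * ‖x‖ ^ 2 ≤ fderiv ℝ U x x := by
  have hLm : 0 ≤ L / m := div_nonneg hL hm.le
  have hKx : K ≤ ‖x‖ := by nlinarith
  have hthreshold : (m + L) * K ≤ m / 2 * ‖x‖ := by
    calc (m + L) * K = m / 2 * (2 * K * (1 + L / m)) := by field_simp
      _ ≤ m / 2 * ‖x‖ := by gcongr
  have := sub_mul_le_fderiv_apply_self hK hU hfderiv0 hHess hconv hKx
  nlinarith [norm_nonneg x]

end Potential

theorem norm_gradient_eq_norm_fderiv {F : Type*} [NormedAddCommGroup F] [InnerProductSpace ℝ F]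
    [CompleteSpace F] (U : F → ℝ) (x : F) : ‖gradient U x‖ = ‖fderiv ℝ U x‖ :=
  (InnerProductSpace.toDual ℝ F).symm.norm_map _

theorem norm_sub_smul_sq_le {F : Type*} [NormedAddCommGroup F] [InnerProductSpace ℝ F]
    {x g : F} {γ m L : ℝ} (hγ : 0 ≤ γ) (hγL : γ * L ^ 2 ≤ m / 4)
    (hinner : m / 2 * ‖x‖ ^ 2 ≤ inner ℝ g x) (hg : ‖g‖ ≤ L * ‖x‖) :
    ‖x - γ • g‖ ^ 2 ≤ (1 - 3 * (m * γ / 4)) * ‖x‖ ^ 2 := by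
  have hg2 : ‖g‖ ^ 2 ≤ L ^ 2 * ‖x‖ ^ 2 := by
    rw [← mul_pow]; exact pow_le_pow_left₀ (norm_nonneg g) hg 2
  rw [norm_sub_sq_real, inner_smul_right, real_inner_comm, norm_smul, Real.norm_of_nonneg hγ]
  nlinarith [mul_le_mul_of_nonneg_left hg2 (sq_nonneg γ), mul_le_mul_of_nonneg_left hγL hγ,
    mul_le_mul_of_nonneg_left hinner hγ, sq_nonneg ‖x‖]

theorem exp_neg_le_sqrt_one_sub {A : ℝ} (hA0 : 0 ≤ A) (hA : A ≤ 1 / 2) :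
    exp (-A) ≤ √(1 - A) := by
  rw [le_sqrt (exp_pos _).le (by linarith), ← exp_nat_mul,
    show ((2 : ℕ) : ℝ) * -A = -(2 * A) by push_cast; ring]
  -- `exp (-2A) ≤ 1 / (1 + 2A) ≤ 1 - A`
  have h := mul_le_mul_of_nonneg_right (add_one_le_exp (2 * A)) (exp_pos (-(2 * A))).le
  rw [← exp_add, add_neg_cancel, exp_zero] at h
  nlinarith [exp_pos (-(2 * A))]

theorem exp_div_sqrt_one_sub_pow_le {A c q r : ℝ} {d : ℕ} (hA0 : 0 ≤ A) (hA : A ≤ 1 / 2)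
    (hc : 0 ≤ c) (hr : 0 ≤ r) (hd : d ≤ c * r) (hq : q ≤ (1 - 3 * A) * r) :
    exp (c * q / (1 - A)) / √(1 - A) ^ d ≤ exp (c * (1 - A) * r) := by
  have hA1 : 0 < 1 - A := by linarith
  have hsqrt : exp (-(d * A)) ≤ √(1 - A) ^ d := by
    rw [neg_mul_eq_mul_neg, exp_nat_mul]
    exact pow_le_pow_left₀ (exp_pos _).le (exp_neg_le_sqrt_one_sub hA0 hA) d
  have hquad : c * q / (1 - A) ≤ c * (1 - 2 * A) * r := by
    rw [div_le_iff₀ hA1]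
    nlinarith [mul_le_mul_of_nonneg_left hq hc, mul_nonneg (mul_nonneg hc hr) (sq_nonneg A)]
  calc exp (c * q / (1 - A)) / √(1 - A) ^ d
      ≤ exp (c * (1 - 2 * A) * r) / exp (-(d * A)) :=
        div_le_div₀ (exp_pos _).le (exp_le_exp.mpr hquad) (exp_pos _) hsqrt
    _ = exp (c * (1 - 2 * A) * r + d * A) := by rw [← exp_sub, sub_neg_eq_add]
    _ ≤ exp (c * (1 - A) * r) := exp_le_exp.mpr (by nlinarith [mul_le_mul_of_nonneg_right hd hA0])

/-- Geometric drift of ULA outside a ball: with `η̄ = m/16`, `K̃ = 2K(1+L/m)`,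
`γ̄ ∈ (0, m/(4L²)]`, `γ ∈ (0, γ̄]` and `‖x‖ ≥ max(K̃, 4√(d/m))`, the one-step ULA kernel
satisfies `Q_γ V_η̄(x) ≤ exp(−η̄mγ‖x‖²/4) V_η̄(x)`, where `V_η̄(x) = exp(η̄‖x‖²)`. -/
theorem ula_drift_outside_ball {d : ℕ} (U : EuclideanSpace ℝ (Fin d) → ℝ)
    (L m K γbar γ : ℝ) (hm : 0 < m) (hmL : m ≤ L) (hK : 0 ≤ K)
    (hU : ContDiff ℝ 2 U) (hgrad0 : gradient U 0 = 0)
    (hHess : ∀ x, ‖iteratedFDeriv ℝ 2 U x‖ ≤ L)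
    (hconv : ∀ x y : EuclideanSpace ℝ (Fin d), K ≤ ‖x‖ → ‖y‖ = 1 →
      m ≤ iteratedFDeriv ℝ 2 U x ![y, y])
    (hγbar : γbar ∈ Set.Ioc 0 (m / (4 * L ^ 2))) (hγ : γ ∈ Set.Ioc 0 γbar) :
    ∀ x : EuclideanSpace ℝ (Fin d),
      max (2 * K * (1 + L / m)) (4 * Real.sqrt (d / m)) ≤ ‖x‖ →
      ∫ z, Real.exp ((m / 16) * ‖x - γ • gradient U x + Real.sqrt (2 * γ) • z‖ ^ 2)
          ∂(stdGaussian d) ≤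
        Real.exp (-(m / 16) * m * γ * ‖x‖ ^ 2 / 4) * Real.exp ((m / 16) * ‖x‖ ^ 2) := by
  intro x hx
  obtain ⟨hγ0, hγγbar⟩ := hγ
  have hL : 0 < L := hm.trans_le hmL
  have hγL : γ * L ^ 2 ≤ m / 4 := by
    have := hγγbar.trans hγbar.2
    rw [le_div_iff₀ (by positivity)] at this
    linarith
  have hA : m * γ / 4 ≤ 1 / 2 := by nlinarith [mul_le_mul_of_nonneg_left hmL hm.le]
  have hfderiv0 : fderiv ℝ U 0 = 0 := by
    rw [← norm_eq_zero, ← norm_gradient_eq_norm_fderiv, hgrad0, norm_zero]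
  have hdrift : m / 2 * ‖x‖ ^ 2 ≤ inner ℝ (gradient U x) x := by
    rw [inner_gradient_left]
    exact half_mul_norm_sq_le_fderiv_apply_self hm hL.le hK hU hfderiv0 hHess hconv
      ((le_max_left _ _).trans hx)
  have hy := norm_sub_smul_sq_le hγ0.le hγL hdrift ((norm_gradient_eq_norm_fderiv U x).trans_le
    (norm_fderiv_le_of_norm_iteratedFDeriv_two_le hU hfderiv0 hHess x))
  have hd : (d : ℝ) ≤ m / 16 * ‖x‖ ^ 2 := by
    have h := pow_le_pow_left₀ (by positivity) ((le_max_right _ _).trans hx) 2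
    rw [mul_pow, sq_sqrt (by positivity), mul_div_assoc'] at h
    rw [div_le_iff₀ hm] at h
    linarith
  have hs : 2 * (m / 16) * √(2 * γ) ^ 2 = m * γ / 4 := by rw [sq_sqrt (by positivity)]; ring
  rw [integral_exp_mul_norm_sq_stdGaussian (by linarith), hs, ← exp_add]
  calc _ ≤ exp (m / 16 * (1 - m * γ / 4) * ‖x‖ ^ 2) :=
        exp_div_sqrt_one_sub_pow_le (by positivity) hA (by positivity) (by positivity) hd hy
    _ = _ := by ring_nf
end
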